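/- arXiv:math-ph/0310022 — 6 statements merged into one kernel-verified Lean document; each statement's English description precedes it below -/
import Mathlib

section
/- For any two Lagrangian planes ℓ, ℓ' in ℝ^{2n} corresponding under the Souriau map to symmetric unitary matrices w, w' respectively, the rank of w - w' equals n minus the dimension of ℓ ∩ ℓ'. -/
open Matrix Complex

noncomputable section

/-- Phase space ℝ^{2n} = ℝ^n_x × ℝ^n_p. -/
abbrev V (n : ℕ) := (Fin n → ℝ) × (Fin n → ℝ)

/-- Standard symplectic form σ(z,z') = p·x' - p'·x. -/
def Omega (n : ℕ) (z w : V n) : ℝ := z.2 ⬝ᵥ w.1 - w.2 ⬝ᵥ z.1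

/-- Lagrangian plane: n-dimensional subspace on which σ vanishes. -/
def IsLagrangian (n : ℕ) (L : Submodule ℝ (V n)) : Prop :=
  Module.finrank ℝ L = n ∧ ∀ z ∈ L, ∀ w ∈ L, Omega n z w = 0

/-- Symplectic linear map. -/
def IsSymplectic (n : ℕ) (S : V n →ₗ[ℝ] V n) : Prop :=
  Function.Bijective S ∧ ∀ z w, Omega n (S z) (S w) = Omega n z w

/-- Dimension of a maximal subspace on which Q is positive. -/
def posIndex {E : Type*} [AddCommGroup E] [Module ℝ E] (Q : E → ℝ) : ℕ :=
  sSup {k | ∃ W : Submodule ℝ E, Module.finrank ℝ W = k ∧ ∀ v ∈ W, v ≠ 0 → 0 < Q v}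

def negIndex {E : Type*} [AddCommGroup E] [Module ℝ E] (Q : E → ℝ) : ℕ :=
  posIndex fun v => -Q v

/-- σ(z,z') + σ(z',z'') + σ(z'',z) on ℓ × ℓ' × ℓ''. -/
def tripleForm (n : ℕ) (L L' L'' : Submodule ℝ (V n)) : (L × L' × L'') → ℝ :=
  fun t => Omega n t.1 t.2.1 + Omega n t.2.1 t.2.2 + Omega n t.2.2 t.1

/-- Kashiwara signature τ(ℓ,ℓ',ℓ''). -/
def tau (n : ℕ) (L L' L'' : Submodule ℝ (V n)) : ℤ :=
  (posIndex (tripleForm n L L' L'') : ℤ) - negIndex (tripleForm n L L' L'')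

/-- ∂dim(ℓ,ℓ',ℓ''). -/
def ddim (n : ℕ) (L L' L'' : Submodule ℝ (V n)) : ℤ :=
  (Module.finrank ℝ ↥(L ⊓ L') : ℤ) - Module.finrank ℝ ↥(L ⊓ L'')
    + Module.finrank ℝ ↥(L' ⊓ L'')

/-- Index of inertia. -/
def Inert (n : ℕ) (L L' L'' : Submodule ℝ (V n)) : ℤ :=
  (tau n L L' L'' - ddim n L L' L'' + n) / 2

/-- Real and imaginary parts of a complex matrix. -/
def reM (n : ℕ) (u : Matrix (Fin n) (Fin n) ℂ) : Matrix (Fin n) (Fin n) ℝ :=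
  of fun i j => (u i j).re

def imM (n : ℕ) (u : Matrix (Fin n) (Fin n) ℂ) : Matrix (Fin n) (Fin n) ℝ :=
  of fun i j => (u i j).im

/-- The identification A+iB ↦ [[A,-B],[B,A]] acting on ℝ^{2n}. -/
def uReal (n : ℕ) (u : Matrix (Fin n) (Fin n) ℂ) : V n →ₗ[ℝ] V n where
  toFun z := (reM n u *ᵥ z.1 - imM n u *ᵥ z.2, imM n u *ᵥ z.1 + reM n u *ᵥ z.2)
  map_add' a b := by
    ext i <;> (simp [Matrix.mulVec_add]; try ring)
  map_smul' c a := by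
    ext i <;> (simp [Matrix.mulVec_smul]; try ring)

/-- The momentum plane ℓ_p = 0 × ℝ^n. -/
def ellP (n : ℕ) : Submodule ℝ (V n) := Submodule.prod ⊥ ⊤

/-!
Identify `ℝ^{2n}` with `ℂ^n` by `(x, p) ↦ x + i p`, so that `uReal n u` becomes `u *ᵥ ·`. Then
`ℓ = u·ℓ_p` consists of the `ζ` with `w ζ̄ = -ζ`, where `w = u uᵀ`: the conjugates `v = ζ̄` are the
fixed points of the antilinear map `τ_w v = -conj (w v)`, an involution because `w` is symmetric
unitary. A vector fixed by both `τ_w` and `τ_w'` lies in `K = ker (w - w')`, so `ℓ ∩ ℓ'` becomes the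
fixed locus of `τ_w` on `K`, which `τ_w` preserves. The fixed locus `F` of an antilinear involution
of a complex space `K` is a real form, `K = F ⊕ i F`, hence `dim_ℝ (ℓ ∩ ℓ') = dim_ℂ K`, and
rank–nullity for `w - w'` concludes.
-/

open Module

section RealForm

variable {E : Type*} [AddCommGroup E] [Module ℂ E] [Module ℝ E] [IsScalarTower ℝ ℂ E]

def realForm (K : Submodule ℂ E) (τ : E →ₗ[ℝ] E) : Submodule ℝ E :=
  K.restrictScalars ℝ ⊓ LinearMap.eqLocus τ LinearMap.id

theorem mem_realForm {K : Submodule ℂ E} {τ : E →ₗ[ℝ] E} {v : E} :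
    v ∈ realForm K τ ↔ v ∈ K ∧ τ v = v :=
  Iff.rfl

theorem disjoint_realForm_map_I_smul {τ : E →ₗ[ℝ] E}
    (hτ : ∀ (c : ℂ) v, τ (c • v) = star c • τ v) (K : Submodule ℂ E) :
    Disjoint (realForm K τ) ((realForm K τ).map (DistribSMul.toLinearMap ℝ E I)) := by
  refine Submodule.disjoint_def.mpr ?_
  rintro _ ⟨-, hv⟩ ⟨x, ⟨-, hx⟩, rfl⟩
  change τ (I • x) = I • x at hv
  rw [hτ, hx, Complex.star_def, conj_I, neg_smul] at hv
  have h2 : (2 : ℝ) • (I • x) = 0 := by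
    rw [two_smul]
    nth_rewrite 1 [← hv]
    exact neg_add_cancel _
  exact (smul_eq_zero.mp h2).resolve_left two_ne_zero

theorem realForm_sup_map_I_smul {τ : E →ₗ[ℝ] E}
    (hτ : ∀ (c : ℂ) v, τ (c • v) = star c • τ v) (hττ : ∀ v, τ (τ v) = v)
    {K : Submodule ℂ E} (hK : ∀ v ∈ K, τ v ∈ K) :
    realForm K τ ⊔ (realForm K τ).map (DistribSMul.toLinearMap ℝ E I) = K.restrictScalars ℝ := by
  refine le_antisymm (sup_le inf_le_left ?_) fun v hv => Submodule.mem_sup.mpr ?_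
  · rintro _ ⟨x, ⟨hx, -⟩, rfl⟩
    exact K.smul_mem I hx
  -- `v = a + I • b` with `a = (v + τ v) / 2` and `b = -I • (v - τ v) / 2`, both fixed by `τ`.
  refine ⟨(2⁻¹ : ℝ) • (v + τ v), ⟨K.smul_of_tower_mem _ (K.add_mem hv (hK v hv)), ?_⟩,
    I • (2⁻¹ : ℝ) • (-I • (v - τ v)), ⟨(2⁻¹ : ℝ) • (-I • (v - τ v)),
      ⟨K.smul_of_tower_mem _ (K.smul_mem _ (K.sub_mem hv (hK v hv))), ?_⟩, rfl⟩, ?_⟩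
  · change τ _ = _
    rw [map_smul, map_add, hττ, add_comm, LinearMap.id_apply]
  · change τ _ = _
    rw [map_smul, hτ, map_sub, hττ, star_neg, Complex.star_def, conj_I, ← neg_sub v, smul_neg,
      neg_smul, neg_neg, LinearMap.id_apply]
  · rw [smul_comm, smul_smul, mul_neg, I_mul_I, neg_neg, one_smul, ← smul_add,
      add_add_sub_cancel, ← two_smul ℝ, smul_smul, inv_mul_cancel₀ two_ne_zero, one_smul]

theorem finrank_realForm [FiniteDimensional ℂ E] {τ : E →ₗ[ℝ] E}
    (hτ : ∀ (c : ℂ) v, τ (c • v) = star c • τ v) (hττ : ∀ v, τ (τ v) = v)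
    {K : Submodule ℂ E} (hK : ∀ v ∈ K, τ v ∈ K) :
    finrank ℝ (realForm K τ) = finrank ℂ K := by
  have : FiniteDimensional ℝ E := Module.Finite.trans ℂ E
  have hfinrank_map : finrank ℝ ((realForm K τ).map (DistribSMul.toLinearMap ℝ E I)) =
      finrank ℝ (realForm K τ) :=
    (Submodule.equivMapOfInjective _ (smul_right_injective E I_ne_zero) _).finrank_eq.symm
  have hfinrank_K : finrank ℝ (K.restrictScalars ℝ) = 2 * finrank ℂ K := by
    rw [← Complex.finrank_real_complex, Module.finrank_mul_finrank ℝ ℂ K]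
    rfl
  have := Submodule.finrank_sup_add_finrank_inf_eq (realForm K τ)
    ((realForm K τ).map (DistribSMul.toLinearMap ℝ E I))
  rw [realForm_sup_map_I_smul hτ hττ hK, (disjoint_realForm_map_I_smul hτ K).eq_bot, finrank_bot,
    hfinrank_map, hfinrank_K] at this
  omega

end RealForm

section SymmetricUnitary

variable {ι : Type*} [Fintype ι]

def negStarMulVec (w : Matrix ι ι ℂ) : (ι → ℂ) →ₗ[ℝ] (ι → ℂ) where
  toFun v := -star (w *ᵥ v)
  map_add' v v' := by rw [mulVec_add, star_add, neg_add]
  map_smul' r v := by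
    rw [← Complex.coe_smul, mulVec_smul, star_smul, Complex.star_def, conj_ofReal, smul_neg]
    rfl

theorem negStarMulVec_apply (w : Matrix ι ι ℂ) (v : ι → ℂ) :
    negStarMulVec w v = -star (w *ᵥ v) := rfl

theorem negStarMulVec_smul (w : Matrix ι ι ℂ) (c : ℂ) (v : ι → ℂ) :
    negStarMulVec w (c • v) = star c • negStarMulVec w v := by
  rw [negStarMulVec_apply, negStarMulVec_apply, mulVec_smul, star_smul, smul_neg]

theorem mulVec_star_mulVec_of_mem_unitaryGroup [DecidableEq ι] {w : Matrix ι ι ℂ}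
    (hw : w ∈ unitaryGroup ι ℂ) (hwT : w.IsSymm) (v : ι → ℂ) :
    w *ᵥ star (w *ᵥ v) = star v := by
  rw [star_mulVec, ← mulVec_transpose, ← conjTranspose_transpose_eq_transpose_conjTranspose,
    hwT.eq, mulVec_mulVec, ← star_eq_conjTranspose, mem_unitaryGroup_iff.mp hw, one_mulVec]

theorem negStarMulVec_negStarMulVec [DecidableEq ι] {w : Matrix ι ι ℂ}
    (hw : w ∈ unitaryGroup ι ℂ) (hwT : w.IsSymm) (v : ι → ℂ) :
    negStarMulVec w (negStarMulVec w v) = v := by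
  rw [negStarMulVec_apply, negStarMulVec_apply, mulVec_neg, star_neg, neg_neg,
    mulVec_star_mulVec_of_mem_unitaryGroup hw hwT, star_star]

theorem negStarMulVec_mem_ker [DecidableEq ι] {w w' : Matrix ι ι ℂ}
    (hw : w ∈ unitaryGroup ι ℂ) (hwT : w.IsSymm) (hw' : w' ∈ unitaryGroup ι ℂ) (hw'T : w'.IsSymm)
    {v : ι → ℂ} (hv : v ∈ LinearMap.ker (w - w').mulVecLin) :
    negStarMulVec w v ∈ LinearMap.ker (w - w').mulVecLin := by
  have hwv : w *ᵥ v = w' *ᵥ v := by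
    simpa [sub_mulVec, sub_eq_zero] using hv
  simp only [LinearMap.mem_ker, mulVecLin_apply, negStarMulVec_apply, sub_mulVec, mulVec_neg]
  nth_rewrite 2 [hwv]
  rw [mulVec_star_mulVec_of_mem_unitaryGroup hw hwT,
    mulVec_star_mulVec_of_mem_unitaryGroup hw' hw'T, sub_self, neg_zero]

theorem eqLocus_negStarMulVec_inf (w w' : Matrix ι ι ℂ) :
    LinearMap.eqLocus (negStarMulVec w) LinearMap.id ⊓
        LinearMap.eqLocus (negStarMulVec w') LinearMap.id =
      realForm (LinearMap.ker (w - w').mulVecLin) (negStarMulVec w) := by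
  ext v
  simp only [Submodule.mem_inf, mem_realForm, LinearMap.mem_eqLocus,
    LinearMap.mem_ker, mulVecLin_apply, negStarMulVec_apply, LinearMap.id_apply, sub_mulVec,
    sub_eq_zero]
  constructor
  · rintro ⟨hv, hv'⟩
    exact ⟨star_injective (neg_injective (hv.trans hv'.symm)), hv⟩
  · rintro ⟨hwv, hv⟩
    exact ⟨hv, hwv ▸ hv⟩

end SymmetricUnitary

theorem mul_transpose_self_mem_unitaryGroup {ι : Type*} [Fintype ι] [DecidableEq ι]
    {u : Matrix ι ι ℂ} (hu : u ∈ unitaryGroup ι ℂ) : u * uᵀ ∈ unitaryGroup ι ℂ :=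
  Submonoid.mul_mem _ hu (transpose_mem_unitaryGroup_iff.mpr hu)

def complexify (n : ℕ) : V n ≃ₗ[ℝ] (Fin n → ℂ) where
  toFun z j := ⟨z.1 j, z.2 j⟩
  invFun v := (fun j => (v j).re, fun j => (v j).im)
  map_add' _ _ := rfl
  map_smul' _ _ := by funext j; apply Complex.ext <;> simp
  left_inv _ := rfl
  right_inv _ := rfl

theorem complexify_uReal (n : ℕ) (u : Matrix (Fin n) (Fin n) ℂ) (z : V n) :
    complexify n (uReal n u z) = u *ᵥ complexify n z := by
  funext j
  apply Complex.ext <;>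
    simp [complexify, uReal, reM, imM, mulVec, dotProduct, Complex.re_sum, Complex.im_sum,
      Finset.sum_sub_distrib, Finset.sum_add_distrib, add_comm]

theorem uReal_uReal (n : ℕ) (u v : Matrix (Fin n) (Fin n) ℂ) (z : V n) :
    uReal n u (uReal n v z) = uReal n (u * v) z :=
  (complexify n).injective <| by simp only [complexify_uReal, mulVec_mulVec]

theorem uReal_one (n : ℕ) (z : V n) : uReal n 1 z = z :=
  (complexify n).injective <| by rw [complexify_uReal, one_mulVec]

theorem mem_map_uReal_iff {n : ℕ} {u : Matrix (Fin n) (Fin n) ℂ}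
    (hu : u ∈ unitaryGroup (Fin n) ℂ) (S : Submodule ℝ (V n)) (z : V n) :
    z ∈ S.map (uReal n u) ↔ uReal n uᴴ z ∈ S := by
  rw [← star_eq_conjTranspose]
  constructor
  · rintro ⟨y, hy, rfl⟩
    rwa [uReal_uReal, mem_unitaryGroup_iff'.mp hu, uReal_one]
  · exact fun hz => ⟨_, hz, by rw [uReal_uReal, mem_unitaryGroup_iff.mp hu, uReal_one]⟩

theorem mem_ellP_iff (n : ℕ) (z : V n) :
    z ∈ ellP n ↔ star (complexify n z) = -complexify n z := by
  simp [ellP, Submodule.mem_prod, funext_iff, Complex.ext_iff, complexify,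
    CharZero.eq_neg_self_iff]

theorem mem_map_uReal_ellP_iff {n : ℕ} {u : Matrix (Fin n) (Fin n) ℂ}
    (hu : u ∈ unitaryGroup (Fin n) ℂ) (z : V n) :
    z ∈ (ellP n).map (uReal n u) ↔ (u * uᵀ) *ᵥ star (complexify n z) = -complexify n z := by
  rw [mem_map_uReal_iff hu, mem_ellP_iff, complexify_uReal, star_mulVec,
    conjTranspose_conjTranspose, ← mulVec_transpose, ← mulVec_mulVec]
  constructor
  · intro h
    rw [h, mulVec_neg, mulVec_mulVec, ← star_eq_conjTranspose, mem_unitaryGroup_iff.mp hu,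
      one_mulVec]
  · intro h
    rw [← one_mulVec (uᵀ *ᵥ _), ← mem_unitaryGroup_iff'.mp hu, ← mulVec_mulVec, h, mulVec_neg,
      star_eq_conjTranspose]

def conjComplexify (n : ℕ) : V n ≃ₗ[ℝ] (Fin n → ℂ) :=
  (complexify n).trans (LinearEquiv.piCongrRight fun _ => Complex.conjAe.toLinearEquiv)

theorem conjComplexify_apply (n : ℕ) (z : V n) :
    conjComplexify n z = star (complexify n z) := rfl

theorem map_uReal_ellP_eq_comap {n : ℕ} {u : Matrix (Fin n) (Fin n) ℂ}
    (hu : u ∈ unitaryGroup (Fin n) ℂ) :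
    (ellP n).map (uReal n u) =
      (LinearMap.eqLocus (negStarMulVec (u * uᵀ)) LinearMap.id).comap
        (conjComplexify n : V n →ₗ[ℝ] Fin n → ℂ) := by
  ext z
  rw [mem_map_uReal_ellP_iff hu, Submodule.mem_comap, LinearMap.mem_eqLocus, LinearEquiv.coe_coe,
    conjComplexify_apply, negStarMulVec_apply, LinearMap.id_apply, neg_eq_iff_eq_neg,
    ← star_neg, star_inj]

theorem finrank_map_uReal_ellP_inf {n : ℕ} {u u' : Matrix (Fin n) (Fin n) ℂ}
    (hu : u ∈ unitaryGroup (Fin n) ℂ) (hu' : u' ∈ unitaryGroup (Fin n) ℂ) :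
    finrank ℝ ↥((ellP n).map (uReal n u) ⊓ (ellP n).map (uReal n u')) =
      finrank ℂ ↥(LinearMap.ker (u * uᵀ - u' * u'ᵀ).mulVecLin) := by
  have hw := mul_transpose_self_mem_unitaryGroup hu
  have hw' := mul_transpose_self_mem_unitaryGroup hu'
  have hwT := isSymm_mul_transpose_self u
  have hw'T := isSymm_mul_transpose_self u'
  rw [map_uReal_ellP_eq_comap hu, map_uReal_ellP_eq_comap hu', ← Submodule.comap_inf,
    eqLocus_negStarMulVec_inf, Submodule.comap_equiv_eq_map_symm, LinearEquiv.finrank_map_eq]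
  exact finrank_realForm (negStarMulVec_smul _) (negStarMulVec_negStarMulVec hw hwT)
    fun _ => negStarMulVec_mem_ker hw hwT hw' hw'T

theorem Matrix.rank_add_finrank_ker_mulVecLin {K : Type*} [Field K] {m ι : Type*} [Fintype ι]
    (A : Matrix m ι K) : A.rank + finrank K ↥(LinearMap.ker A.mulVecLin) = Fintype.card ι := by
  rw [Matrix.rank, LinearMap.finrank_range_add_finrank_ker, Module.finrank_fintype_fun_eq_card]

theorem souriau_rank_general (n : ℕ) (u u' : Matrix (Fin n) (Fin n) ℂ)
    (hu : u ∈ Matrix.unitaryGroup (Fin n) ℂ) (hu' : u' ∈ Matrix.unitaryGroup (Fin n) ℂ)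
    (L L' : Submodule ℝ (V n))
    (hL : L = (ellP n).map (uReal n u)) (hL' : L' = (ellP n).map (uReal n u')) :
    (u * uᵀ - u' * u'ᵀ).rank = n - Module.finrank ℝ ↥(L ⊓ L') := by
  have hrank := (u * uᵀ - u' * u'ᵀ).rank_add_finrank_ker_mulVecLin
  rw [Fintype.card_fin, ← finrank_map_uReal_ellP_inf hu hu', ← hL, ← hL'] at hrank
  omega

/-- Under the Souriau map ℓ = u·ℓ_p ↦ w = u·uᵀ,
rank (w - w') = n - dim (ℓ ∩ ℓ'). -/
theorem souriau_rank (n : ℕ) (u u' : Matrix (Fin n) (Fin n) ℂ)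
    (hu : u ∈ Matrix.unitaryGroup (Fin n) ℂ) (hu' : u' ∈ Matrix.unitaryGroup (Fin n) ℂ)
    (L L' : Submodule ℝ (V n))
    (hL : L = (ellP n).map (uReal n u)) (hL' : L' = (ellP n).map (uReal n u'))
    (hLag : IsLagrangian n L) (hLag' : IsLagrangian n L') :
    (u * uᵀ - u' * u'ᵀ).rank = n - Module.finrank ℝ ↥(L ⊓ L') :=
  souriau_rank_general n u u' hu hu' L L' hL hL'
end
end

section
/- The signature of a triple of Lagrangian planes is antisymmetric: swapping any two arguments changes its sign, e.g. τ(ℓ',ℓ,ℓ'') = -τ(ℓ,ℓ',ℓ'') and τ(ℓ'',ℓ',ℓ) = -τ(ℓ,ℓ',ℓ''). -/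
open Matrix Complex

noncomputable section

/-!
A transposition of ℓ, ℓ', ℓ'' reverses the order of the arguments in each of the three σ-terms
of the triple form, so by antisymmetry of σ the permuted form is the negative of the original
one, pulled back along the corresponding permutation of the factors of ℓ × ℓ' × ℓ''. A linear
isomorphism preserves both inertia indices, and negating a form exchanges them.
-/

def signature {E : Type*} [AddCommGroup E] [Module ℝ E] (Q : E → ℝ) : ℤ :=
  (posIndex Q : ℤ) - negIndex Q

section Signature

variable {E F : Type*} [AddCommGroup E] [Module ℝ E] [AddCommGroup F] [Module ℝ F]

theorem posIndex_comp_linearEquiv (e : E ≃ₗ[ℝ] F) (Q : F → ℝ) :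
    posIndex (Q ∘ e) = posIndex Q := by
  unfold posIndex
  congr 1
  ext k
  constructor
  · rintro ⟨W, hW, hpos⟩
    refine ⟨W.map (e : E →ₗ[ℝ] F), (LinearEquiv.finrank_map_eq e W).trans hW, ?_⟩
    rintro _ ⟨w, hw, rfl⟩ hw0
    exact hpos w hw (by simpa using hw0)
  · rintro ⟨W, hW, hpos⟩
    refine ⟨W.map (e.symm : F →ₗ[ℝ] E), (LinearEquiv.finrank_map_eq e.symm W).trans hW, ?_⟩
    rintro _ ⟨w, hw, rfl⟩ hw0
    simpa using hpos w hw (by simpa using hw0)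

theorem negIndex_comp_linearEquiv (e : E ≃ₗ[ℝ] F) (Q : F → ℝ) :
    negIndex (Q ∘ e) = negIndex Q :=
  posIndex_comp_linearEquiv e fun v => -Q v

theorem signature_comp_linearEquiv (e : E ≃ₗ[ℝ] F) (Q : F → ℝ) :
    signature (Q ∘ e) = signature Q := by
  rw [signature, signature, posIndex_comp_linearEquiv, negIndex_comp_linearEquiv]

theorem signature_neg (Q : E → ℝ) : signature (fun v => -Q v) = -signature Q := by
  have hpos : posIndex (fun v => -Q v) = negIndex Q := rfl
  have hneg : negIndex (fun v => -Q v) = posIndex Q := by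
    simp only [negIndex, neg_neg]
  rw [signature, signature, hpos, hneg]
  ring

end Signature

section TripleSwaps

variable {A B C : Type*} [AddCommGroup A] [AddCommGroup B] [AddCommGroup C]
  [Module ℝ A] [Module ℝ B] [Module ℝ C]

def swapFirstTwo : (B × A × C) ≃ₗ[ℝ] (A × B × C) where
  toFun t := (t.2.1, t.1, t.2.2)
  invFun t := (t.2.1, t.1, t.2.2)
  map_add' _ _ := rfl
  map_smul' _ _ := rfl
  left_inv _ := rfl
  right_inv _ := rfl

def swapOuter : (C × B × A) ≃ₗ[ℝ] (A × B × C) where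
  toFun t := (t.2.2, t.2.1, t.1)
  invFun t := (t.2.2, t.2.1, t.1)
  map_add' _ _ := rfl
  map_smul' _ _ := rfl
  left_inv _ := rfl
  right_inv _ := rfl

def swapLastTwo : (A × C × B) ≃ₗ[ℝ] (A × B × C) where
  toFun t := (t.1, t.2.2, t.2.1)
  invFun t := (t.1, t.2.2, t.2.1)
  map_add' _ _ := rfl
  map_smul' _ _ := rfl
  left_inv _ := rfl
  right_inv _ := rfl

end TripleSwaps

theorem Omega_antisymm (n : ℕ) (z w : V n) : Omega n w z = -Omega n z w := by
  simp only [Omega]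
  ring

section Tau

variable (n : ℕ) (L L' L'' : Submodule ℝ (V n))

theorem tau_eq_signature : tau n L L' L'' = signature (tripleForm n L L' L'') := rfl

theorem tau_eq_neg_of_tripleForm_eq_neg_comp {A B C : Submodule ℝ (V n)}
    (e : (A × B × C) ≃ₗ[ℝ] (L × L' × L''))
    (he : tripleForm n A B C = fun t => -tripleForm n L L' L'' (e t)) :
    tau n A B C = -tau n L L' L'' := by
  rw [tau_eq_signature, he, signature_neg, tau_eq_signature]
  exact congrArg Neg.neg (signature_comp_linearEquiv e (tripleForm n L L' L''))

theorem tau_swap_first_two : tau n L' L L'' = -tau n L L' L'' :=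
  tau_eq_neg_of_tripleForm_eq_neg_comp n L L' L'' swapFirstTwo <| funext fun t => by
    obtain ⟨a, b, c⟩ := t
    simp only [tripleForm, swapFirstTwo, LinearEquiv.coe_mk, LinearMap.coe_mk, AddHom.coe_mk]
    linarith [Omega_antisymm n a b, Omega_antisymm n b c, Omega_antisymm n c a]

theorem tau_swap_outer : tau n L'' L' L = -tau n L L' L'' :=
  tau_eq_neg_of_tripleForm_eq_neg_comp n L L' L'' swapOuter <| funext fun t => by
    obtain ⟨a, b, c⟩ := t
    simp only [tripleForm, swapOuter, LinearEquiv.coe_mk, LinearMap.coe_mk, AddHom.coe_mk]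
    linarith [Omega_antisymm n a b, Omega_antisymm n b c, Omega_antisymm n c a]

theorem tau_swap_last_two : tau n L L'' L' = -tau n L L' L'' :=
  tau_eq_neg_of_tripleForm_eq_neg_comp n L L' L'' swapLastTwo <| funext fun t => by
    obtain ⟨a, b, c⟩ := t
    simp only [tripleForm, swapLastTwo, LinearEquiv.coe_mk, LinearMap.coe_mk, AddHom.coe_mk]
    linarith [Omega_antisymm n a b, Omega_antisymm n b c, Omega_antisymm n c a]

end Tau

theorem tau_antisymmetric_general (n : ℕ) (L L' L'' : Submodule ℝ (V n)) :
    tau n L' L L'' = -tau n L L' L'' ∧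
    tau n L'' L' L = -tau n L L' L'' ∧
    tau n L L'' L' = -tau n L L' L'' :=
  ⟨tau_swap_first_two n L L' L'', tau_swap_outer n L L' L'', tau_swap_last_two n L L' L''⟩

/-- the signature is antisymmetric under swapping any two arguments. -/
theorem tau_antisymmetric (n : ℕ) (L L' L'' : Submodule ℝ (V n))
    (hL : IsLagrangian n L) (hL' : IsLagrangian n L') (hL'' : IsLagrangian n L'') :
    tau n L' L L'' = -tau n L L' L'' ∧
    tau n L'' L' L = -tau n L L' L'' ∧
    tau n L L'' L' = -tau n L L' L'' :=
  tau_antisymmetric_general n L L' L''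
end
end

section
/- For all Lagrangian planes ℓ, ℓ', ℓ'' in (ℝ^{2n},σ), the signature satisfies τ(ℓ,ℓ',ℓ'') ≡ n + dim(ℓ∩ℓ') - dim(ℓ∩ℓ'') + dim(ℓ'∩ℓ'') (mod 2). -/
/-!
The polar form of `Q(x, y, z) = σ(x, y) + σ(y, z) + σ(z, x)` on `ℓ × ℓ' × ℓ''` is
`σ(x', y - z) + σ(y', z - x) + σ(z', x - y)`. A Lagrangian plane is its own `σ`-orthogonal, so
`(x, y, z)` lies in the radical of `Q` iff `y - z ∈ ℓ`, `z - x ∈ ℓ'` and `x - y ∈ ℓ''`; these are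
exactly the triples `(a + b, a + c, b + c)` with `a ∈ ℓ ∩ ℓ'`, `b ∈ ℓ ∩ ℓ''`, `c ∈ ℓ' ∩ ℓ''`, and
this parametrization is injective. By Sylvester's law of inertia the positive and negative indices
satisfy `n₊ + n₋ + dim rad Q = 3n`, hence `τ = n₊ - n₋ ≡ 3n - dim rad Q (mod 2)`.
-/

open Matrix Complex

noncomputable section

open Module QuadraticMap

section Index

variable {E : Type*} [AddCommGroup E] [Module ℝ E] [FiniteDimensional ℝ E]

theorem posIndex_eq_sigPos (Q : QuadraticForm ℝ E) : posIndex ⇑Q = sigPos Q := by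
  rw [← (sigPos_isGreatest Q).csSup_eq]
  simp [posIndex, QuadraticMap.PosDef]

theorem negIndex_eq_sigNeg (Q : QuadraticForm ℝ E) : negIndex ⇑Q = sigNeg Q :=
  posIndex_eq_sigPos (-Q)

theorem posIndex_add_negIndex_add_finrank_radical (Q : QuadraticForm ℝ E) :
    posIndex ⇑Q + negIndex ⇑Q + finrank ℝ Q.radical = finrank ℝ E := by
  rw [posIndex_eq_sigPos, negIndex_eq_sigNeg]
  exact QuadraticForm.sigPos_add_sigNeg_add_radical

end Index

namespace Submodule

variable {K E : Type*} [Field K] [AddCommGroup E] [Module K E] (U U' U'' : Submodule K E)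

def pairwiseInfToProd : (↥(U ⊓ U') × ↥(U ⊓ U'') × ↥(U' ⊓ U'')) →ₗ[K] (U × U' × U'') where
  toFun p :=
    (⟨p.1 + p.2.1, U.add_mem p.1.2.1 p.2.1.2.1⟩, ⟨p.1 + p.2.2, U'.add_mem p.1.2.2 p.2.2.2.1⟩,
      ⟨p.2.1 + p.2.2, U''.add_mem p.2.1.2.2 p.2.2.2.2⟩)
  map_add' p q := by ext <;> simp only [Prod.fst_add, Prod.snd_add, coe_add] <;> abel
  map_smul' c p := by ext <;> simp [smul_add]

variable [CharZero K]

theorem pairwiseInfToProd_injective : Function.Injective (pairwiseInfToProd U U' U'') := by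
  rw [← LinearMap.ker_eq_bot, LinearMap.ker_eq_bot']
  rintro ⟨a, b, c⟩ h
  simp only [pairwiseInfToProd, LinearMap.coe_mk, AddHom.coe_mk, Prod.ext_iff, Prod.fst_zero,
    Prod.snd_zero, mk_eq_zero] at h
  obtain ⟨hab, hac, hbc⟩ := h
  have ha : (a : E) = 0 := by linear_combination (norm := module) (2 : K)⁻¹ • (hab + hac - hbc)
  have hb : (b : E) = 0 := by linear_combination (norm := module) (2 : K)⁻¹ • (hab - hac + hbc)
  have hc : (c : E) = 0 := by linear_combination (norm := module) (2 : K)⁻¹ • (hac - hab + hbc)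
  exact Prod.ext (Subtype.ext ha) (Prod.ext (Subtype.ext hb) (Subtype.ext hc))

theorem mem_range_pairwiseInfToProd_iff (t : U × U' × U'') :
    t ∈ LinearMap.range (pairwiseInfToProd U U' U'') ↔
      ((t.2.1 : E) - t.2.2 ∈ U ∧ (t.2.2 : E) - t.1 ∈ U' ∧ (t.1 : E) - t.2.1 ∈ U'') := by
  obtain ⟨⟨x, hx⟩, ⟨y, hy⟩, ⟨z, hz⟩⟩ := t
  dsimp only
  constructor
  · rintro ⟨⟨⟨a, ha⟩, ⟨b, hb⟩, ⟨c, hc⟩⟩, h⟩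
    simp only [pairwiseInfToProd, LinearMap.coe_mk, AddHom.coe_mk, Prod.mk.injEq,
      Subtype.mk.injEq] at h
    obtain ⟨rfl, rfl, rfl⟩ := h
    refine ⟨?_, ?_, ?_⟩
    · convert U.sub_mem ha.1 hb.1 using 1; abel
    · convert U'.sub_mem hc.1 ha.2 using 1; abel
    · convert U''.sub_mem hb.2 hc.2 using 1; abel
  · rintro ⟨h₁, h₂, h₃⟩
    have ha : (2 : K)⁻¹ • (x + y - z) ∈ U ⊓ U' :=
      ⟨U.smul_mem _ (by convert U.add_mem hx h₁ using 1; abel),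
        U'.smul_mem _ (by convert U'.sub_mem hy h₂ using 1; abel)⟩
    have hb : (2 : K)⁻¹ • (x - y + z) ∈ U ⊓ U'' :=
      ⟨U.smul_mem _ (by convert U.sub_mem hx h₁ using 1; abel),
        U''.smul_mem _ (by convert U''.add_mem hz h₃ using 1; abel)⟩
    have hc : (2 : K)⁻¹ • (-x + y + z) ∈ U' ⊓ U'' :=
      ⟨U'.smul_mem _ (by convert U'.add_mem hy h₂ using 1; abel),
        U''.smul_mem _ (by convert U''.sub_mem hz h₃ using 1; abel)⟩
    refine ⟨(⟨_, ha⟩, ⟨_, hb⟩, ⟨_, hc⟩), ?_⟩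
    simp only [pairwiseInfToProd, LinearMap.coe_mk, AddHom.coe_mk, Prod.mk.injEq,
      Subtype.mk.injEq]
    refine ⟨?_, ?_, ?_⟩ <;> module

end Submodule

namespace LinearMap.BilinForm

variable {K E : Type*} [Field K] [AddCommGroup E] [Module K E]

theorem orthogonal_eq_self_of_le_orthogonal [FiniteDimensional K E] {B : LinearMap.BilinForm K E}
    (hB : B.Nondegenerate) {L : Submodule K E} (hL : L ≤ B.orthogonal L)
    (h : 2 * finrank K L = finrank K E) : B.orthogonal L = L :=
  (Submodule.eq_of_le_of_finrank_le hL (by rw [finrank_orthogonal hB]; omega)).symm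

variable (B : LinearMap.BilinForm K E) (U U' U'' : Submodule K E)

def kashiwaraForm : QuadraticForm K (U × U' × U'') :=
  let x := U.subtype ∘ₗ LinearMap.fst K U (U' × U'')
  let y := U'.subtype ∘ₗ LinearMap.fst K U' U'' ∘ₗ LinearMap.snd K U (U' × U'')
  let z := U''.subtype ∘ₗ LinearMap.snd K U' U'' ∘ₗ LinearMap.snd K U (U' × U'')
  LinearMap.BilinMap.toQuadraticMap (B.compl₁₂ x y + B.compl₁₂ y z + B.compl₁₂ z x)

@[simp]
theorem kashiwaraForm_apply (t : U × U' × U'') :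
    B.kashiwaraForm U U' U'' t = B t.1 t.2.1 + B t.2.1 t.2.2 + B t.2.2 t.1 :=
  rfl

variable {B U U' U''}

theorem polar_kashiwaraForm (hB : B.IsAlt) (t s : U × U' × U'') :
    QuadraticMap.polar (B.kashiwaraForm U U' U'') t s =
      B s.1 (t.2.1 - t.2.2) + B s.2.1 (t.2.2 - t.1) + B s.2.2 (t.1 - t.2.1) := by
  simp only [QuadraticMap.polar, kashiwaraForm_apply, Prod.fst_add, Prod.snd_add,
    Submodule.coe_add, map_add, map_sub, LinearMap.add_apply]
  have skew := LinearMap.IsAlt.neg hB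
  linear_combination -skew t.1 s.2.1 - skew t.2.1 s.2.2 - skew t.2.2 s.1

variable [CharZero K]

theorem mem_radical_kashiwaraForm_iff (hB : B.IsAlt) (hU : B.orthogonal U = U)
    (hU' : B.orthogonal U' = U') (hU'' : B.orthogonal U'' = U'') (t : U × U' × U'') :
    t ∈ (B.kashiwaraForm U U' U'').radical ↔
      ((t.2.1 : E) - t.2.2 ∈ U ∧ (t.2.2 : E) - t.1 ∈ U' ∧ (t.1 : E) - t.2.1 ∈ U'') := by
  rw [radical_eq_ker_polarBilin, LinearMap.mem_ker, LinearMap.ext_iff]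
  simp only [polarBilin_apply_apply, polar_kashiwaraForm hB, LinearMap.zero_apply]
  constructor
  · intro h
    refine ⟨hU.le fun x hx => ?_, hU'.le fun y hy => ?_, hU''.le fun z hz => ?_⟩
    · simpa using h (⟨x, hx⟩, 0, 0)
    · simpa using h (0, ⟨y, hy⟩, 0)
    · simpa using h (0, 0, ⟨z, hz⟩)
  · rintro ⟨h₁, h₂, h₃⟩ s
    rw [hU.ge h₁ _ s.1.2, hU'.ge h₂ _ s.2.1.2, hU''.ge h₃ _ s.2.2.2, add_zero, add_zero]

theorem finrank_radical_kashiwaraForm [FiniteDimensional K E] (hB : B.IsAlt)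
    (hU : B.orthogonal U = U) (hU' : B.orthogonal U' = U') (hU'' : B.orthogonal U'' = U'') :
    finrank K (B.kashiwaraForm U U' U'').radical =
      finrank K ↥(U ⊓ U') + finrank K ↥(U ⊓ U'') + finrank K ↥(U' ⊓ U'') := by
  have hrad : (B.kashiwaraForm U U' U'').radical =
      LinearMap.range (U.pairwiseInfToProd U' U'') := by
    ext t
    rw [mem_radical_kashiwaraForm_iff hB hU hU' hU'', Submodule.mem_range_pairwiseInfToProd_iff]
  rw [hrad, LinearMap.finrank_range_of_inj (Submodule.pairwiseInfToProd_injective U U' U''),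
    finrank_prod, finrank_prod, add_assoc]

end LinearMap.BilinForm

def omegaBilin (n : ℕ) : LinearMap.BilinForm ℝ (V n) :=
  LinearMap.mk₂ ℝ (Omega n)
    (fun _ _ _ => by simp [Omega]; ring) (fun _ _ _ => by simp [Omega]; ring)
    (fun _ _ _ => by simp [Omega]; ring) (fun _ _ _ => by simp [Omega]; ring)

theorem omegaBilin_isAlt (n : ℕ) : (omegaBilin n).IsAlt := fun z => by
  simp [omegaBilin, Omega, dotProduct_comm]

theorem omegaBilin_nondegenerate (n : ℕ) : (omegaBilin n).Nondegenerate := by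
  refine (omegaBilin_isAlt n).isRefl.nondegenerate_iff_separatingLeft.mpr fun z hz => ?_
  ext i
  · simpa [omegaBilin, Omega] using hz (0, Pi.single i 1)
  · simpa [omegaBilin, Omega] using hz (Pi.single i 1, 0)

theorem finrank_V (n : ℕ) : finrank ℝ (V n) = 2 * n := by
  simp [finrank_prod, two_mul]

theorem IsLagrangian.orthogonal_eq {n : ℕ} {L : Submodule ℝ (V n)} (hL : IsLagrangian n L) :
    (omegaBilin n).orthogonal L = L :=
  LinearMap.BilinForm.orthogonal_eq_self_of_le_orthogonal (omegaBilin_nondegenerate n)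
    (fun z hz w hw => hL.2 w hw z hz) (by rw [hL.1, finrank_V])

/-- τ(ℓ,ℓ',ℓ'') ≡ n + ∂dim(ℓ,ℓ',ℓ'') (mod 2). -/
theorem tau_mod_two (n : ℕ) (L L' L'' : Submodule ℝ (V n))
    (hL : IsLagrangian n L) (hL' : IsLagrangian n L') (hL'' : IsLagrangian n L'') :
    tau n L L' L'' ≡ (n : ℤ) + ddim n L L' L'' [ZMOD 2] := by
  let q := (omegaBilin n).kashiwaraForm L L' L''
  have hq : ⇑q = tripleForm n L L' L'' := rfl
  have hsylvester := posIndex_add_negIndex_add_finrank_radical q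
  rw [hq, LinearMap.BilinForm.finrank_radical_kashiwaraForm (omegaBilin_isAlt n)
    hL.orthogonal_eq hL'.orthogonal_eq hL''.orthogonal_eq, finrank_prod, finrank_prod,
    hL.1, hL'.1, hL''.1] at hsylvester
  unfold tau ddim Int.ModEq
  omega
end
end

section
/- If Lagrangian planes ℓ and ℓ' are transversal (ℓ ∩ ℓ' = 0) with Souriau images w and w', then det(I - w·(w')⁻¹) ≠ 0, equivalently -w(w')⁻¹ has no eigenvalues on the negative real half-line, so its principal logarithm Log(-w(w')⁻¹) is well-defined. -/
open Matrix Complex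

noncomputable section

section SouriauAux

variable {n : ℕ}

/-- The complex vector associated to a phase-space point. -/
def cvAux (z : V n) : Fin n → ℂ :=
  fun i => (z.1 i : ℂ) + (z.2 i : ℂ) * Complex.I

/-- Coercion of a real vector to a complex one. -/
def jCAux (p : Fin n → ℝ) : Fin n → ℂ := fun i => (p i : ℂ)

lemma star_jCAux (p : Fin n → ℝ) : star (jCAux p) = jCAux p := by
  funext i
  simp [jCAux, Pi.star_apply, Complex.conj_ofReal]

lemma cvAux_eq_zero {z : V n} (h : cvAux z = 0) : z = 0 := by
  have h1 : ∀ i, (z.1 i : ℂ) + (z.2 i : ℂ) * Complex.I = 0 := fun i => congrFun h i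
  have hz : ∀ i, z.1 i = 0 ∧ z.2 i = 0 := by
    intro i
    have hi := h1 i
    constructor
    · have := congrArg Complex.re hi; simpa using this
    · have := congrArg Complex.im hi; simpa using this
  ext i
  · exact (hz i).1
  · exact (hz i).2

lemma cvAux_inj {a b : V n} (h : cvAux a = cvAux b) : a = b := by
  have hz : ∀ i, a.1 i = b.1 i ∧ a.2 i = b.2 i := by
    intro i
    have hi := congrFun h i
    constructor
    · have := congrArg Complex.re hi; simpa [cvAux] using this
    · have := congrArg Complex.im hi; simpa [cvAux] using this
  ext i
  · exact (hz i).1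
  · exact (hz i).2

lemma cvAux_reim (v : Fin n → ℂ) :
    cvAux ((fun i => (v i).re), (fun i => (v i).im)) = v := by
  funext i; simp [cvAux, Complex.re_add_im]

lemma cvAux_uReal (u : Matrix (Fin n) (Fin n) ℂ) (p : Fin n → ℝ) :
    cvAux (uReal n u (0, p)) = Complex.I • (u *ᵥ jCAux p) := by
  have h0 : uReal n u (0, p) = (-(imM n u *ᵥ p), reM n u *ᵥ p) := by
    show ((reM n u *ᵥ 0 - imM n u *ᵥ p, imM n u *ᵥ 0 + reM n u *ᵥ p) : V n) = _
    simp [Matrix.mulVec_zero]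
  rw [h0]
  funext i
  simp only [cvAux, Pi.smul_apply, smul_eq_mul, Matrix.mulVec, dotProduct,
    reM, imM, jCAux, of_apply, Pi.neg_apply]
  rw [Finset.mul_sum]
  push_cast
  rw [← Finset.sum_neg_distrib, Finset.sum_mul, ← Finset.sum_add_distrib]
  refine Finset.sum_congr rfl fun k _ => ?_
  have hk : u i k = ((u i k).re : ℂ) + ((u i k).im : ℂ) * Complex.I :=
    (Complex.re_add_im _).symm
  rw [hk]; ring_nf
  simp [Complex.I_sq]
  ring

lemma mem_souriau_iff (u : Matrix (Fin n) (Fin n) ℂ)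
    (h1 : u * star u = 1) (h2 : star u * u = 1) (z : V n) :
    z ∈ (ellP n).map (uReal n u) ↔ (u * uᵀ) *ᵥ star (cvAux z) = -(cvAux z) := by
  have htr : uᵀ * (star u)ᵀ = 1 := by
    rw [← Matrix.transpose_mul, h2, Matrix.transpose_one]
  constructor
  · rintro ⟨y, hy, rfl⟩
    have hy1 : y.1 = 0 := by
      have := (Submodule.mem_prod.mp hy).1
      simpa using this
    have hy' : y = (0, y.2) := by rw [← hy1]
    rw [hy', cvAux_uReal]
    rw [star_smul, star_mulVec, star_jCAux]
    have : (jCAux y.2) ᵥ* uᴴ = (star u)ᵀ *ᵥ (jCAux y.2) := by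
      rw [Matrix.mulVec_transpose]; rfl
    rw [this, Matrix.mulVec_smul, Matrix.mulVec_mulVec]
    rw [Matrix.mul_assoc u uᵀ, htr, Matrix.mul_one]
    simp [Complex.star_def, Complex.conj_I, neg_smul]
  · intro hv
    set v := cvAux z with hvdef
    set pC : Fin n → ℂ := (-Complex.I) • (star u *ᵥ v) with hpC
    have hsuv : star u *ᵥ v = -(uᵀ *ᵥ star v) := by
      have := hv
      have hv' : v = -((u * uᵀ) *ᵥ star v) := by rw [this]; ring_nf
      calc star u *ᵥ v = star u *ᵥ (-((u * uᵀ) *ᵥ star v)) := by rw [← hv']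
        _ = -((star u * (u * uᵀ)) *ᵥ star v) := by
            rw [Matrix.mulVec_neg, Matrix.mulVec_mulVec]
        _ = -(uᵀ *ᵥ star v) := by rw [← Matrix.mul_assoc, h2, Matrix.one_mul]
    have hpC' : pC = Complex.I • (uᵀ *ᵥ star v) := by
      rw [hpC, hsuv]; rw [smul_neg, neg_smul, neg_neg]
    have hstarpC : star pC = pC := by
      rw [hpC, star_smul, star_mulVec]
      have : (star v) ᵥ* (star u)ᴴ = uᵀ *ᵥ star v := by
        rw [Matrix.star_eq_conjTranspose, Matrix.conjTranspose_conjTranspose,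
          ← Matrix.mulVec_transpose]
      rw [this, hsuv]
      simp [Complex.star_def, Complex.conj_I]
    set p : Fin n → ℝ := fun i => (pC i).re with hp
    have hjp : jCAux p = pC := by
      funext i
      have him : (pC i).im = 0 := by
        have := congrFun hstarpC i
        exact Complex.conj_eq_iff_im.mp this
      apply Complex.ext
      · simp [jCAux, hp]
      · simp [jCAux, hp, him]
    refine ⟨(0, p), ?_, ?_⟩
    · exact Submodule.mem_prod.mpr ⟨by simp, trivial⟩
    · apply cvAux_inj
      rw [cvAux_uReal, hjp, hpC, Matrix.mulVec_smul, Matrix.mulVec_mulVec, h1,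
        Matrix.one_mulVec, smul_smul]
      simp [hvdef]

end SouriauAux

/-- if ℓ ∩ ℓ' = 0 and w, w' are the Souriau images of ℓ, ℓ', then
det(I - w(w')⁻¹) ≠ 0, i.e. -w(w')⁻¹ has no eigenvalue on the negative half-line,
so that its principal logarithm is well-defined. -/
theorem transversal_log_defined (n : ℕ) (u u' : Matrix (Fin n) (Fin n) ℂ)
    (hu : u ∈ Matrix.unitaryGroup (Fin n) ℂ) (hu' : u' ∈ Matrix.unitaryGroup (Fin n) ℂ)
    (L L' : Submodule ℝ (V n))
    (hL : L = (ellP n).map (uReal n u)) (hL' : L' = (ellP n).map (uReal n u'))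
    (hLag : IsLagrangian n L) (hLag' : IsLagrangian n L')
    (htrans : L ⊓ L' = ⊥) :
    (1 - (u * uᵀ) * (u' * u'ᵀ)⁻¹).det ≠ 0 ∧
    ∀ c ∈ spectrum ℂ (-((u * uᵀ) * (u' * u'ᵀ)⁻¹)), ¬(c.im = 0 ∧ c.re ≤ 0) := by
  classical
  have hu1 : u * star u = 1 := Matrix.mem_unitaryGroup_iff.mp hu
  have hu2 : star u * u = 1 := Matrix.mem_unitaryGroup_iff'.mp hu
  have hu1' : u' * star u' = 1 := Matrix.mem_unitaryGroup_iff.mp hu'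
  have hu2' : star u' * u' = 1 := Matrix.mem_unitaryGroup_iff'.mp hu'
  set w : Matrix (Fin n) (Fin n) ℂ := u * uᵀ with hw
  set w' : Matrix (Fin n) (Fin n) ℂ := u' * u'ᵀ with hw'
  have hstar_mul : ∀ a : Matrix (Fin n) (Fin n) ℂ,
      star (a * aᵀ) = (star a)ᵀ * star a := by
    intro a
    rw [StarMul.star_mul]
    congr 1
  have hsw : star w = (star u)ᵀ * star u := hstar_mul u
  have hsw' : star w' = (star u')ᵀ * star u' := hstar_mul u'
  have hwsw : w * star w = 1 := by
    rw [hsw, hw, Matrix.mul_assoc, ← Matrix.mul_assoc uᵀ, ← Matrix.transpose_mul,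
      hu2, Matrix.transpose_one, Matrix.one_mul, hu1]
  have hsww : star w * w = 1 := by
    rw [hsw, hw, Matrix.mul_assoc, ← Matrix.mul_assoc (star u), hu2,
      Matrix.one_mul, ← Matrix.transpose_mul, hu1, Matrix.transpose_one]
  have hwsw' : w' * star w' = 1 := by
    rw [hsw', hw', Matrix.mul_assoc, ← Matrix.mul_assoc u'ᵀ, ← Matrix.transpose_mul,
      hu2', Matrix.transpose_one, Matrix.one_mul, hu1']
  have hsww' : star w' * w' = 1 := by
    rw [hsw', hw', Matrix.mul_assoc, ← Matrix.mul_assoc (star u'), hu2',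
      Matrix.one_mul, ← Matrix.transpose_mul, hu1', Matrix.transpose_one]
  have hswt : (star w)ᵀ = star w := by
    rw [hsw, Matrix.transpose_mul, Matrix.transpose_transpose]
  have hswt' : (star w')ᵀ = star w' := by
    rw [hsw', Matrix.transpose_mul, Matrix.transpose_transpose]
  have hstar_wv : ∀ v : Fin n → ℂ, star (w *ᵥ star v) = star w *ᵥ v := by
    intro v
    rw [star_mulVec, star_star, ← Matrix.star_eq_conjTranspose,
      ← Matrix.mulVec_transpose, hswt]
  have hstar_wv' : ∀ v : Fin n → ℂ, star (w' *ᵥ star v) = star w' *ᵥ v := by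
    intro v
    rw [star_mulVec, star_star, ← Matrix.star_eq_conjTranspose,
      ← Matrix.mulVec_transpose, hswt']
  -- Key: transversality forces `det (w - w') ≠ 0`.
  have hdet : (w - w').det ≠ 0 := by
    intro hdet0
    obtain ⟨q, hq0, hq⟩ := Matrix.exists_mulVec_eq_zero_iff.mpr hdet0
    have hM1 : w *ᵥ star (star q) = w' *ᵥ star (star q) := by
      rw [star_star]
      rw [Matrix.sub_mulVec, sub_eq_zero] at hq
      exact hq
    -- produce a fixed vector of the antilinear involution C v = -(w *ᵥ star v)
    have key : ∃ v : Fin n → ℂ, v ≠ 0 ∧ w *ᵥ star v = -v ∧ w' *ᵥ star v = -v := by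
      set v₁ : Fin n → ℂ := star q with hv₁
      have hv₁0 : v₁ ≠ 0 := by
        rw [hv₁]
        intro h
        exact hq0 (by simpa using congrArg star h)
      have hCC : ∀ v : Fin n → ℂ, w *ᵥ star (-(w *ᵥ star v)) = -v := by
        intro v
        rw [star_neg, hstar_wv, Matrix.mulVec_neg, Matrix.mulVec_mulVec, hwsw,
          Matrix.one_mulVec]
      by_cases hcase : v₁ + -(w *ᵥ star v₁) = 0
      · -- C v₁ = -v₁, use I • v₁
        have hfix1 : w *ᵥ star v₁ = v₁ := by
          have := hcase
          rw [add_neg_eq_zero] at this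
          exact this.symm
        refine ⟨Complex.I • v₁, ?_, ?_, ?_⟩
        · exact smul_ne_zero Complex.I_ne_zero hv₁0
        · rw [star_smul, Matrix.mulVec_smul, hfix1]
          simp [Complex.star_def, Complex.conj_I, neg_smul]
        · rw [star_smul, Matrix.mulVec_smul, ← hM1, hfix1]
          simp [Complex.star_def, Complex.conj_I, neg_smul]
      · refine ⟨v₁ + -(w *ᵥ star v₁), hcase, ?_, ?_⟩
        · rw [star_add, Matrix.mulVec_add, hCC]
          abel
        · -- need w' on the fixed vector
          have hconj : star w *ᵥ v₁ = star w' *ᵥ v₁ := by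
            rw [← hstar_wv, ← hstar_wv', hM1]
          have h2' : w' *ᵥ star (-(w *ᵥ star v₁)) = -v₁ := by
            rw [star_neg, hstar_wv, Matrix.mulVec_neg, hconj,
              Matrix.mulVec_mulVec, hwsw', Matrix.one_mulVec]
          rw [star_add, Matrix.mulVec_add, h2', ← hM1]
          abel
    obtain ⟨v, hv0, hvw, hvw'⟩ := key
    set z : V n := ((fun i => (v i).re), (fun i => (v i).im)) with hz
    have hcz : cvAux z = v := cvAux_reim v
    have hzL : z ∈ L := by
      rw [hL]
      exact (mem_souriau_iff u hu1 hu2 z).mpr (by rw [hcz]; exact hvw)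
    have hzL' : z ∈ L' := by
      rw [hL']
      exact (mem_souriau_iff u' hu1' hu2' z).mpr (by rw [hcz]; exact hvw')
    have hzmem : z ∈ L ⊓ L' := ⟨hzL, hzL'⟩
    rw [htrans, Submodule.mem_bot] at hzmem
    apply hv0
    rw [← hcz, hzmem]
    funext i; simp [cvAux]
  -- invert w'
  have hinv' : w'⁻¹ = star w' := Matrix.inv_eq_right_inv hwsw'
  have hdetw' : (star w').det ≠ 0 := by
    intro h
    have := congrArg Matrix.det hsww'
    rw [Matrix.det_mul, h, zero_mul, Matrix.det_one] at this
    exact zero_ne_one this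
  have goal1 : (1 - w * w'⁻¹).det ≠ 0 := by
    have key : 1 - w * w'⁻¹ = (w' - w) * w'⁻¹ := by
      rw [Matrix.sub_mul, hinv', hwsw']
    rw [key, Matrix.det_mul, hinv']
    apply mul_ne_zero _ hdetw'
    rw [show w' - w = -(w - w') from (neg_sub w w').symm, Matrix.det_neg]
    exact mul_ne_zero (pow_ne_zero _ (by norm_num)) hdet
  refine ⟨goal1, ?_⟩
  intro c hc hconds
  obtain ⟨him, hre⟩ := hconds
  set M : Matrix (Fin n) (Fin n) ℂ := w * star w' with hM
  have hMdef : w * w'⁻¹ = M := by rw [hinv']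
  have hMM : star M * M = 1 := by
    rw [hM, StarMul.star_mul, star_star, Matrix.mul_assoc,
      ← Matrix.mul_assoc (star w), hsww, Matrix.one_mul, hwsw']
  rw [spectrum.mem_iff] at hc
  have hdet2 : (algebraMap ℂ (Matrix (Fin n) (Fin n) ℂ) c - (-(w * w'⁻¹))).det = 0 := by
    by_contra hne
    exact hc ((Matrix.isUnit_iff_isUnit_det _).mpr (Ne.isUnit hne))
  have hdet2' : (c • (1 : Matrix (Fin n) (Fin n) ℂ) + M).det = 0 := by
    rw [Algebra.algebraMap_eq_smul_one, sub_neg_eq_add, hMdef] at hdet2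
    exact hdet2
  obtain ⟨q, hq0, hq⟩ := Matrix.exists_mulVec_eq_zero_iff.mpr hdet2'
  have hMq : M *ᵥ q = -(c • q) := by
    rw [Matrix.add_mulVec, Matrix.smul_mulVec, Matrix.one_mulVec] at hq
    exact eq_neg_of_add_eq_zero_left (by rwa [add_comm] at hq)
  have hS : star q ⬝ᵥ q ≠ 0 := by
    have hrepr : star q ⬝ᵥ q = ((∑ i, Complex.normSq (q i) : ℝ) : ℂ) := by
      rw [dotProduct]
      push_cast
      refine Finset.sum_congr rfl fun i _ => ?_
      simp [Pi.star_apply, Complex.star_def, Complex.normSq_eq_conj_mul_self]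
    rw [hrepr]
    intro h
    have h0 : (∑ i, Complex.normSq (q i)) = 0 := by exact_mod_cast h
    have hall : ∀ i ∈ Finset.univ, Complex.normSq (q i) = 0 :=
      (Finset.sum_eq_zero_iff_of_nonneg fun i _ => Complex.normSq_nonneg _).mp h0
    exact hq0 (funext fun i => Complex.normSq_eq_zero.mp (hall i (Finset.mem_univ i)))
  have hnorm : (star c * c) * (star q ⬝ᵥ q) = star q ⬝ᵥ q := by
    have e1 : star (M *ᵥ q) ⬝ᵥ (M *ᵥ q) = star q ⬝ᵥ q := by
      rw [star_mulVec, Matrix.dotProduct_mulVec, Matrix.vecMul_vecMul,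
        ← Matrix.star_eq_conjTranspose, hMM, Matrix.vecMul_one]
    rw [hMq] at e1
    have e2 : star (-(c • q)) ⬝ᵥ (-(c • q)) = (star c * c) * (star q ⬝ᵥ q) := by
      rw [star_neg, star_smul, neg_dotProduct, dotProduct_neg, neg_neg,
        smul_dotProduct, dotProduct_smul, smul_smul, smul_eq_mul]
    rw [← e2, e1]
  have hcc : star c * c = 1 :=
    mul_right_cancel₀ hS (hnorm.trans (one_mul _).symm)
  have hcr : star c = c := Complex.conj_eq_iff_im.mpr him
  rw [hcr] at hcc
  rcases mul_self_eq_one_iff.mp hcc with h1 | h1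
  · rw [h1] at hre
    norm_num at hre
  · -- c = -1, so (1 - M) has nontrivial kernel, contradicting goal1
    have hMq1 : M *ᵥ q = q := by
      rw [hMq, h1, neg_smul, one_smul, neg_neg]
    have : ((1 : Matrix (Fin n) (Fin n) ℂ) - M) *ᵥ q = 0 := by
      rw [Matrix.sub_mulVec, Matrix.one_mulVec, hMq1, sub_self]
    have hd0 : ((1 : Matrix (Fin n) (Fin n) ℂ) - M).det = 0 :=
      Matrix.exists_mulVec_eq_zero_iff.mp ⟨q, hq0, this⟩
    rw [hMdef] at goal1
    exact goal1 hd0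
end
end

section
/- Setting m(ℓ_∞,ℓ'_∞) = (1/2π)(θ - θ' + i·Tr Log(-w(w')⁻¹)) + n/2 for transversal pairs, where ℓ_∞ ≡ (w,θ), ℓ'_∞ ≡ (w',θ') with det w = e^{iθ}, det w' = e^{iθ'}, the value m(ℓ_∞,ℓ'_∞) is an integer. -/
open Matrix Complex

noncomputable section

/-!
From `exp Lg = -w w'⁻¹` and `det ∘ exp = exp ∘ Tr` we get
`exp (Tr Lg) = det (-w w'⁻¹) = (-1)ⁿ e^{i(θ - θ')}`, so `Tr Lg = i(nπ + θ - θ') + 2πik` for some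
integer `k`, and then the quantity in question equals `-k`. The identity `det ∘ exp = exp ∘ Tr`
comes from the ODE `f' = f · Tr A` for `f s = det (exp (s A))`, whose derivative at `0` is
Jacobi's formula `d/ds det (1 + s A) |_{s=0} = Tr A`.
-/

section DetExp

open scoped Matrix.Norms.Operator

variable {𝕜 n : Type*} [NontriviallyNormedField 𝕜] [Fintype n] [DecidableEq n]

theorem Matrix.differentiable_det : Differentiable 𝕜 (fun M : Matrix n n 𝕜 => M.det) := by
  have hentry : ∀ i j, Differentiable 𝕜 (fun M : Matrix n n 𝕜 => M i j) := fun i j =>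
    ContinuousLinearMap.differentiable
      ⟨entryLinearMap 𝕜 𝕜 i j, continuous_id.matrix_elem i j⟩
  simp_rw [det_apply']
  fun_prop

theorem Matrix.det_one_add_smul_eq_eval (A : Matrix n n 𝕜) (t : 𝕜) :
    (1 + t • A).det = (det (1 + (Polynomial.X : Polynomial 𝕜) • A.map Polynomial.C)).eval t := by
  simp [_root_.eval_det, ← smul_eq_mul_diagonal]

theorem Matrix.hasDerivAt_det_of_hasDerivAt_of_eq_one {γ : 𝕜 → Matrix n n 𝕜} {A : Matrix n n 𝕜}
    (hγ : HasDerivAt γ A 0) (h0 : γ 0 = 1) : HasDerivAt (fun t => (γ t).det) A.trace 0 := by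
  obtain ⟨D, hD⟩ : ∃ D, HasFDerivAt (fun M : Matrix n n 𝕜 => M.det) D 1 :=
    ⟨_, (differentiable_det 1).hasFDerivAt⟩
  have hline : HasDerivAt (fun t : 𝕜 => (1 + t • A).det) (D A) 0 := by
    have : HasDerivAt (fun t : 𝕜 => 1 + t • A) A 0 :=
      (((hasDerivAt_id' (0 : 𝕜)).smul_const A).const_add 1).congr_deriv (one_smul 𝕜 A)
    exact hD.comp_hasDerivAt_of_eq (0 : 𝕜) this (by simp)
  have hpoly : HasDerivAt (fun t : 𝕜 => (1 + t • A).det) A.trace 0 := by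
    simp_rw [det_one_add_smul_eq_eval]
    rw [← derivative_det_one_add_X_smul]
    exact Polynomial.hasDerivAt _ 0
  rw [← hline.unique hpoly]
  exact hD.comp_hasDerivAt_of_eq (0 : 𝕜) hγ h0.symm

variable {𝕂 : Type*} [RCLike 𝕂]

theorem Matrix.det_exp_smul_add (A : Matrix n n 𝕂) (s t : 𝕂) :
    (NormedSpace.exp ((s + t) • A)).det =
      (NormedSpace.exp (s • A)).det * (NormedSpace.exp (t • A)).det := by
  rw [add_smul, Matrix.exp_add_of_commute _ _ ((Commute.refl A).smul_left s |>.smul_right t),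
    det_mul]

theorem Matrix.hasDerivAt_det_exp_smul (A : Matrix n n 𝕂) (t : 𝕂) :
    HasDerivAt (fun s : 𝕂 => (NormedSpace.exp (s • A)).det)
      ((NormedSpace.exp (t • A)).det * A.trace) t := by
  have h0 : HasDerivAt (fun s : 𝕂 => (NormedSpace.exp (s • A)).det) A.trace (t - t) := by
    rw [sub_self]
    refine hasDerivAt_det_of_hasDerivAt_of_eq_one ?_ (by simp)
    exact (hasDerivAt_exp_smul_const' (𝕂 := 𝕂) A 0).congr_deriv (by simp)
  have hshift : (fun s : 𝕂 => (NormedSpace.exp (s • A)).det) =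
      fun s => (NormedSpace.exp (t • A)).det * (NormedSpace.exp ((s - t) • A)).det := by
    funext s
    rw [← det_exp_smul_add, add_sub_cancel]
  rw [hshift]
  exact (h0.comp_sub_const t t).const_mul _

theorem Matrix.det_exp (A : Matrix n n 𝕂) : (NormedSpace.exp A).det = NormedSpace.exp A.trace := by
  set f : 𝕂 → 𝕂 := fun s => (NormedSpace.exp (s • A)).det
  have hg : ∀ s, HasDerivAt (fun s => f s * NormedSpace.exp (s • -A.trace)) 0 s := fun s =>
    ((hasDerivAt_det_exp_smul A s).fun_mul
      (hasDerivAt_exp_smul_const' (𝕂 := 𝕂) (-A.trace) s)).congr_deriv (by ring)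
  have hconst := is_const_of_deriv_eq_zero (fun s => (hg s).differentiableAt)
    (fun s => (hg s).deriv) 1 0
  simp only [f, one_smul, zero_smul, NormedSpace.exp_zero, det_one, mul_one] at hconst
  rw [NormedSpace.exp_neg, mul_inv_eq_one₀ (NormedSpace.isUnit_exp _).ne_zero] at hconst
  exact hconst

end DetExp

theorem det_neg_mul_inv_eq_exp {n : ℕ} {w w' : Matrix (Fin n) (Fin n) ℂ} {θ θ' : ℝ}
    (hθ : w.det = Complex.exp (Complex.I * θ)) (hθ' : w'.det = Complex.exp (Complex.I * θ')) :
    (-(w * w'⁻¹)).det =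
      Complex.exp (n * (Real.pi * Complex.I) + (Complex.I * θ - Complex.I * θ')) := by
  rw [Matrix.det_neg, Matrix.det_mul, Matrix.det_nonsing_inv, Ring.inverse_eq_inv', hθ, hθ',
    Complex.exp_add, Complex.exp_sub, Complex.exp_nat_mul, Complex.exp_pi_mul_I]
  simp [div_eq_mul_inv]

theorem leray_index_is_integer_general (n : ℕ)
    (w w' : Matrix (Fin n) (Fin n) ℂ)
    (θ θ' : ℝ) (hθ : w.det = Complex.exp (Complex.I * θ)) (hθ' : w'.det = Complex.exp (Complex.I * θ'))
    (Lg : Matrix (Fin n) (Fin n) ℂ)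
    (hLg : NormedSpace.exp Lg = -(w * w'⁻¹)) :
    ∃ k : ℤ, (1 / (2 * (Real.pi : ℂ))) * ((θ : ℂ) - (θ' : ℂ) + Complex.I * Lg.trace)
      + (n : ℂ) / 2 = (k : ℂ) := by
  have hexp : Complex.exp Lg.trace =
      Complex.exp (n * (Real.pi * Complex.I) + (Complex.I * θ - Complex.I * θ')) := by
    rw [← det_neg_mul_inv_eq_exp hθ hθ', ← hLg, Matrix.det_exp, Complex.exp_eq_exp_ℂ]
  obtain ⟨k, hk⟩ := Complex.exp_eq_exp_iff_exists_int.mp hexp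
  refine ⟨-k, ?_⟩
  have hπ : (Real.pi : ℂ) ≠ 0 := Complex.ofReal_ne_zero.mpr Real.pi_ne_zero
  rw [hk]
  push_cast
  field_simp
  linear_combination ((θ : ℂ) - θ' + n * Real.pi + 2 * Real.pi * k) * Complex.I_sq

/-- for transversal ℓ, ℓ' with lifts (w,θ), (w',θ'), the quantity
(1/2π)(θ - θ' + i Tr Log(-w(w')⁻¹)) + n/2 is an integer.  The principal logarithm
Log(-w(w')⁻¹) is characterized as the matrix Lg with exp Lg = -w(w')⁻¹ whose
spectrum lies in the strip |Im z| < π. -/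
theorem leray_index_is_integer (n : ℕ) (u u' : Matrix (Fin n) (Fin n) ℂ)
    (hu : u ∈ Matrix.unitaryGroup (Fin n) ℂ) (hu' : u' ∈ Matrix.unitaryGroup (Fin n) ℂ)
    (w w' : Matrix (Fin n) (Fin n) ℂ) (hw : w = u * uᵀ) (hw' : w' = u' * u'ᵀ)
    (L L' : Submodule ℝ (V n))
    (hL : L = (ellP n).map (uReal n u)) (hL' : L' = (ellP n).map (uReal n u'))
    (htrans : L ⊓ L' = ⊥)
    (θ θ' : ℝ) (hθ : w.det = Complex.exp (Complex.I * θ)) (hθ' : w'.det = Complex.exp (Complex.I * θ'))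
    (Lg : Matrix (Fin n) (Fin n) ℂ)
    (hLg : NormedSpace.exp Lg = -(w * w'⁻¹))
    (hstrip : ∀ c ∈ spectrum ℂ Lg, -Real.pi < c.im ∧ c.im < Real.pi) :
    ∃ k : ℤ, (1 / (2 * (Real.pi : ℂ))) * ((θ : ℂ) - (θ' : ℂ) + Complex.I * Lg.trace)
      + (n : ℂ) / 2 = (k : ℂ) :=
  leray_index_is_integer_general n w w' θ θ' hθ hθ' Lg hLg
end
end

section
/- The Maslov index of a product satisfies μ(S_∞ S'_∞) = μ(S_∞) + μ(S'_∞) - Inert(SS'ℓ_p, Sℓ_p, ℓ_p) for all S_∞, S'_∞ in the universal cover of Sp(n); in particular μ(I_∞) = 0. -/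
open Matrix Complex

noncomputable section

/-! The product formula is the cocycle relation for the triple `(SS'ℓ_p, Sℓ_p, ℓ_p)`, in which
invariance turns `m(SS'ℓ_p, Sℓ_p)` into `μ(S')`. For the identity, the cocycle relation on a diagonal
triple gives `m(ℓ_p, ℓ_p) = Inert(ℓ_p, ℓ_p, ℓ_p)`, which vanishes because the triple form is zero on
a Lagrangian plane while `∂dim = n`. -/

theorem posIndex_eq_zero_of_nonpos {E : Type*} [AddCommGroup E] [Module ℝ E] {Q : E → ℝ}
    (hQ : ∀ v, Q v ≤ 0) : posIndex Q = 0 := by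
  refine Nat.le_zero.mp (csSup_le ⟨0, ⊥, finrank_bot ℝ E, fun v hv hne => absurd hv hne⟩ ?_)
  rintro k ⟨W, rfl, hpos⟩
  have hW : W = ⊥ := (Submodule.eq_bot_iff W).mpr fun v hv => by
    by_contra hne
    exact (hpos v hv hne).not_ge (hQ v)
  rw [hW, finrank_bot]

theorem tau_self_of_isotropic (n : ℕ) {L : Submodule ℝ (V n)}
    (hL : ∀ z ∈ L, ∀ w ∈ L, Omega n z w = 0) : tau n L L L = 0 := by
  have hzero : ∀ t, tripleForm n L L L t = 0 := by
    rintro ⟨a, b, c⟩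
    simp only [tripleForm, hL a a.2 b b.2, hL b b.2 c c.2, hL c c.2 a a.2, add_zero]
  rw [tau, negIndex, posIndex_eq_zero_of_nonpos fun t => (hzero t).le,
    posIndex_eq_zero_of_nonpos fun t => by simp [hzero t]]
  rfl

theorem ddim_self (n : ℕ) (L : Submodule ℝ (V n)) :
    ddim n L L L = Module.finrank ℝ L := by
  rw [ddim, inf_idem]
  ring

theorem Inert_self_of_isLagrangian (n : ℕ) {L : Submodule ℝ (V n)} (hL : IsLagrangian n L) :
    Inert n L L L = 0 := by
  simp [Inert, tau_self_of_isotropic n hL.2, ddim_self, hL.1]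

theorem maslov_product_formula_general (n : ℕ) (Lam : Type*) (G : Type*) [Group G] [MulAction G Lam]
    (pr : Lam → Submodule ℝ (V n)) (hLag : ∀ a, IsLagrangian n (pr a))
    (ρ : G →* (V n ≃ₗ[ℝ] V n))
    (hequiv : ∀ (g : G) (a : Lam), pr (g • a) = (pr a).map (ρ g).toLinearMap)
    (m : Lam → Lam → ℤ)
    (hcoc : ∀ a b c, m a b - m a c + m b c = Inert n (pr a) (pr b) (pr c))
    (hinv : ∀ (g : G) (a b : Lam), m (g • a) (g • b) = m a b)
    (ℓ0 : Lam) (hℓ0 : pr ℓ0 = ellP n)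
    (μ : G → ℤ) (hμ : ∀ g, μ g = m (g • ℓ0) ℓ0) :
    (∀ g g' : G, μ (g * g') = μ g + μ g'
        - Inert n ((ellP n).map (ρ (g * g')).toLinearMap)
                  ((ellP n).map (ρ g).toLinearMap) (ellP n)) ∧
    μ 1 = 0 := by
  have hpr : ∀ g, pr (g • ℓ0) = (ellP n).map (ρ g).toLinearMap := fun g => by rw [hequiv, hℓ0]
  constructor
  · intro g g'
    have hcocycle := hcoc ((g * g') • ℓ0) (g • ℓ0) ℓ0
    have hshift : m ((g * g') • ℓ0) (g • ℓ0) = μ g' := by rw [mul_smul, hinv, hμ]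
    rw [hshift, hpr, hpr, hℓ0, ← hμ, ← hμ] at hcocycle
    omega
  · have hdiag := hcoc ℓ0 ℓ0 ℓ0
    rw [Inert_self_of_isLagrangian n (hLag ℓ0)] at hdiag
    rw [hμ, one_smul]
    omega

/-- product formula for the Maslov index
μ(S_∞S'_∞) = μ(S_∞) + μ(S'_∞) - Inert(SS'ℓ_p, Sℓ_p, ℓ_p), and μ(I_∞) = 0.
The universal cover Sp_∞(n) is modelled as a group G acting on the universal cover Λ_∞(n)
of the Lagrangian Grassmannian, covering (via ρ) the action of Sp(n) on Λ(n);
the Leray index m is invariant under this action and satisfies the cocycle property. -/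
theorem maslov_product_formula (n : ℕ) (Lam : Type*) (G : Type*) [Group G] [MulAction G Lam]
    (pr : Lam → Submodule ℝ (V n)) (hLag : ∀ a, IsLagrangian n (pr a))
    (ρ : G →* (V n ≃ₗ[ℝ] V n)) (hρ : ∀ g, IsSymplectic n (ρ g).toLinearMap)
    (hequiv : ∀ (g : G) (a : Lam), pr (g • a) = (pr a).map (ρ g).toLinearMap)
    (m : Lam → Lam → ℤ)
    (hcoc : ∀ a b c, m a b - m a c + m b c = Inert n (pr a) (pr b) (pr c))
    (hinv : ∀ (g : G) (a b : Lam), m (g • a) (g • b) = m a b)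
    (ℓ0 : Lam) (hℓ0 : pr ℓ0 = ellP n)
    (μ : G → ℤ) (hμ : ∀ g, μ g = m (g • ℓ0) ℓ0) :
    (∀ g g' : G, μ (g * g') = μ g + μ g'
        - Inert n ((ellP n).map (ρ (g * g')).toLinearMap)
                  ((ellP n).map (ρ g).toLinearMap) (ellP n)) ∧
    μ 1 = 0 :=
  maslov_product_formula_general n Lam G pr hLag ρ hequiv m hcoc hinv ℓ0 hℓ0 μ hμ
end
end
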